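/- arXiv:2012.15659 — 2 statements merged into one kernel-verified Lean document; each statement's English description precedes it below -/
import Mathlib

section
/- Let G be a subgroup of SL(2,ℝ) and ρ : G → GL_m(ℂ) a group homomorphism with polynomial growth, i.e. there exist constants C > 0 and α such that ‖ρ(γ)‖ ≤ C·‖γ‖^α for all γ ∈ G. Then for every parabolic element γ ∈ G, every eigenvalue of ρ(γ) has modulus 1. -/
/-!
If `|tr γ| = 2` then `±γ` is unipotent, so `‖γⁿ‖` grows at most linearly in `n`, and by
polynomial growth `‖ρ(γ)ⁿ‖` grows at most polynomially. Since `μⁿ` is an eigenvalue of `ρ(γ)ⁿ`,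
`|μ|ⁿ ≤ ‖ρ(γ)ⁿ‖`, which forces `|μ| ≤ 1`. Applying the same argument to `γ⁻¹`, whose trace is
that of `γ` and for which `μ⁻¹` is an eigenvalue of `ρ(γ⁻¹)`, gives `|μ| ≥ 1`.
-/

open scoped MatrixGroups

/-- Euclidean norm of a matrix in `SL(2, ℝ)`. -/
noncomputable def slnorm (g : SL(2, ℝ)) : ℝ :=
  Real.sqrt (∑ i, ∑ j, ((g : Matrix (Fin 2) (Fin 2) ℝ) i j) ^ 2)

/-- Frobenius (Euclidean) norm of a complex `m × m` matrix. -/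
noncomputable def cmatnorm {m : ℕ} (A : Matrix (Fin m) (Fin m) ℂ) : ℝ :=
  Real.sqrt (∑ i, ∑ j, ‖A i j‖ ^ 2)

open Filter Asymptotics

lemma le_one_of_pow_le_mul_rpow {r D β : ℝ} (h : ∀ n : ℕ, r ^ n ≤ D * ((n : ℝ) + 1) ^ β) :
    r ≤ 1 := by
  by_contra! hr
  set k := ⌈β⌉₊
  have hbig : (fun n : ℕ ↦ r ^ n) =O[atTop] fun n ↦ ((n : ℝ) + 1) ^ k := by
    refine IsBigO.of_bound D (Eventually.of_forall fun n ↦ ?_)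
    rw [Real.norm_of_nonneg (by positivity), Real.norm_of_nonneg (by positivity)]
    have hD : 0 ≤ D := zero_le_one.trans (by simpa using h 0)
    calc r ^ n ≤ D * ((n : ℝ) + 1) ^ β := h n
      _ ≤ D * ((n : ℝ) + 1) ^ (k : ℝ) := by
        gcongr
        · linarith [n.cast_nonneg (α := ℝ)]
        · exact Nat.le_ceil β
      _ = D * ((n : ℝ) + 1) ^ k := by rw [Real.rpow_natCast]
  have hsmall : (fun n : ℕ ↦ ((n : ℝ) + 1) ^ k) =o[atTop] fun n ↦ r ^ n := by
    have hshift := (isLittleO_pow_const_const_pow_of_one_lt (R := ℝ) k hr).comp_tendsto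
      (tendsto_add_atTop_nat 1)
    have hpow : (fun n : ℕ ↦ r ^ (n + 1)) =O[atTop] fun n ↦ r ^ n :=
      IsBigO.of_bound r (Eventually.of_forall fun n ↦ by
        rw [pow_succ, norm_mul, mul_comm, Real.norm_of_nonneg (by positivity : (0 : ℝ) ≤ r)])
    simpa [Function.comp_def] using hshift.trans_isBigO hpow
  exact isLittleO_irrefl (Frequently.of_forall fun n ↦ pow_ne_zero n (by positivity))
    (hbig.trans_isLittleO hsmall)

lemma one_add_pow_of_sq_eq_zero {R : Type*} [Ring R] {N : R} (hN : N ^ 2 = 0) (n : ℕ) :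
    (1 + N) ^ n = 1 + n • N := by
  induction n with
  | zero => simp
  | succ n ih =>
    rw [pow_succ, ih, add_mul, one_mul, smul_mul_assoc, mul_add, mul_one, ← sq, hN, add_zero,
      succ_nsmul, add_assoc, add_comm N]

namespace Matrix

lemma sub_one_sq_eq_zero_of_det_eq_one_of_trace_eq_two {R : Type*} [CommRing R]
    {A : Matrix (Fin 2) (Fin 2) R} (hdet : A.det = 1) (htr : A.trace = 2) : (A - 1) ^ 2 = 0 := by
  rw [det_fin_two] at hdet
  rw [trace_fin_two] at htr
  ext i j
  fin_cases i <;> fin_cases j <;> simp [sq, mul_apply, Fin.sum_univ_two, one_apply]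
  · linear_combination A 0 0 * htr - hdet
  · linear_combination A 0 1 * htr
  · linear_combination A 1 0 * htr
  · linear_combination A 1 1 * htr - hdet

section Frobenius

open scoped Norms.Frobenius

variable {𝕜 n : Type*} [RCLike 𝕜] [Fintype n]

lemma frobenius_norm_eq_sqrt (A : Matrix n n 𝕜) : ‖A‖ = √(∑ i, ∑ j, ‖A i j‖ ^ 2) := by
  simp only [frobenius_norm_def, Real.sqrt_eq_rpow, Real.rpow_two]

lemma norm_le_frobenius_norm_of_mem_spectrum [DecidableEq n] {A : Matrix n n 𝕜} {μ : 𝕜}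
    (hμ : μ ∈ spectrum 𝕜 A) : ‖μ‖ ≤ ‖A‖ := by
  rw [← spectrum_toLin', ← Module.End.hasEigenvalue_iff_mem_spectrum] at hμ
  obtain ⟨v, hv⟩ := hμ.exists_hasEigenvector
  have hAv : A * replicateCol Unit v = μ • replicateCol Unit v := by
    rw [← replicateCol_mulVec, ← replicateCol_smul, ← toLin'_apply, hv.apply_eq_smul]
  have hv0 : 0 < ‖replicateCol Unit v‖ := norm_pos_iff.mpr (by simpa using hv.2)
  refine le_of_mul_le_mul_right ?_ hv0
  calc ‖μ‖ * ‖replicateCol Unit v‖ = ‖A * replicateCol Unit v‖ := by rw [hAv, norm_smul]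
    _ ≤ ‖A‖ * ‖replicateCol Unit v‖ := frobenius_norm_mul _ _

end Frobenius

end Matrix

open scoped Matrix.Norms.Frobenius

lemma cmatnorm_eq_norm {m : ℕ} (A : Matrix (Fin m) (Fin m) ℂ) : cmatnorm A = ‖A‖ :=
  (Matrix.frobenius_norm_eq_sqrt A).symm

lemma slnorm_eq_norm (g : SL(2, ℝ)) : slnorm g = ‖(g : Matrix (Fin 2) (Fin 2) ℝ)‖ := by
  simp only [slnorm, Matrix.frobenius_norm_eq_sqrt, Real.norm_eq_abs, sq_abs]

lemma one_le_slnorm (g : SL(2, ℝ)) : 1 ≤ slnorm g := by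
  have hdet := g.det_coe
  rw [Matrix.det_fin_two] at hdet
  rw [slnorm, Real.one_le_sqrt]
  simp only [Fin.sum_univ_two]
  nlinarith [sq_nonneg (g 0 0 - g 1 1), sq_nonneg (g 0 1 + g 1 0)]

lemma trace_inv_eq_trace {R : Type*} [CommRing R] (g : SL(2, R)) :
    Matrix.trace ((g⁻¹ : SL(2, R)) : Matrix (Fin 2) (Fin 2) R) =
      Matrix.trace (g : Matrix (Fin 2) (Fin 2) R) := by
  rw [Matrix.SpecialLinearGroup.coe_inv, Matrix.adjugate_fin_two, Matrix.trace_fin_two,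
    Matrix.trace_fin_two]
  simp [add_comm]

/-- Writing `γ = s (1 + N)` with `s = tr γ / 2 = ±1` and `N² = 0` gives `γⁿ = sⁿ (1 + n N)`. -/
lemma exists_slnorm_pow_le_of_abs_trace_eq_two (g : SL(2, ℝ))
    (htr : |Matrix.trace (g : Matrix (Fin 2) (Fin 2) ℝ)| = 2) :
    ∃ K, 0 ≤ K ∧ ∀ n : ℕ, slnorm (g ^ n) ≤ K * (n + 1) := by
  set s := Matrix.trace (g : Matrix (Fin 2) (Fin 2) ℝ) / 2 with hs_def
  have hs : |s| = 1 := by rw [hs_def, abs_div, htr]; norm_num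
  have hss : s * s = 1 := by rw [← abs_mul_abs_self, hs, one_mul]
  set N := s • (g : Matrix (Fin 2) (Fin 2) ℝ) - 1
  have hN : N ^ 2 = 0 := by
    refine Matrix.sub_one_sq_eq_zero_of_det_eq_one_of_trace_eq_two ?_ ?_
    · rw [Matrix.det_smul, g.det_coe, Fintype.card_fin, sq, hss, mul_one]
    · rw [Matrix.trace_smul, smul_eq_mul, hs_def]
      linear_combination (2 : ℝ) * hss
  have hg : (g : Matrix (Fin 2) (Fin 2) ℝ) = s • (1 + N) := by
    rw [add_sub_cancel, smul_smul, hss, one_smul]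
  refine ⟨‖(1 : Matrix (Fin 2) (Fin 2) ℝ)‖ + ‖N‖, by positivity, fun n ↦ ?_⟩
  calc slnorm (g ^ n) = ‖s ^ n • (1 + n • N)‖ := by
        rw [slnorm_eq_norm, Matrix.SpecialLinearGroup.coe_pow, hg, smul_pow,
          one_add_pow_of_sq_eq_zero hN]
    _ ≤ ‖(1 : Matrix (Fin 2) (Fin 2) ℝ)‖ + n * ‖N‖ := by
        rw [norm_smul, norm_pow, Real.norm_eq_abs, hs, one_pow, one_mul]
        exact (norm_add_le _ _).trans (by gcongr; exact norm_nsmul_le)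
    _ ≤ (‖(1 : Matrix (Fin 2) (Fin 2) ℝ)‖ + ‖N‖) * (n + 1) := by
        nlinarith [norm_nonneg (1 : Matrix (Fin 2) (Fin 2) ℝ), norm_nonneg N,
          (n.cast_nonneg : (0 : ℝ) ≤ n)]

lemma norm_le_one_of_mem_spectrum_of_abs_trace_eq_two {m : ℕ} {G : Subgroup SL(2, ℝ)}
    (ρ : G →* GL (Fin m) ℂ) {C α : ℝ} (hC : 0 ≤ C)
    (hpoly : ∀ γ : G, cmatnorm (ρ γ : Matrix (Fin m) (Fin m) ℂ) ≤ C * slnorm (γ : SL(2, ℝ)) ^ α)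
    {γ : G} (htr : |Matrix.trace ((γ : SL(2, ℝ)) : Matrix (Fin 2) (Fin 2) ℝ)| = 2) {μ : ℂ}
    (hμ : μ ∈ spectrum ℂ (ρ γ : Matrix (Fin m) (Fin m) ℂ)) : ‖μ‖ ≤ 1 := by
  obtain ⟨K, hK, hgrowth⟩ := exists_slnorm_pow_le_of_abs_trace_eq_two _ htr
  set β := max α 0
  refine le_one_of_pow_le_mul_rpow (D := C * K ^ β) (β := β) fun n ↦ ?_
  have hslnorm := one_le_slnorm ((γ : SL(2, ℝ)) ^ n)
  calc ‖μ‖ ^ n = ‖μ ^ n‖ := (norm_pow _ _).symm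
    _ ≤ ‖(ρ γ : Matrix (Fin m) (Fin m) ℂ) ^ n‖ :=
        Matrix.norm_le_frobenius_norm_of_mem_spectrum (spectrum.pow_mem_pow _ n hμ)
    _ = cmatnorm (ρ (γ ^ n) : Matrix (Fin m) (Fin m) ℂ) := by
        rw [map_pow, Units.val_pow_eq_pow_val, cmatnorm_eq_norm]
    _ ≤ C * slnorm ((γ : SL(2, ℝ)) ^ n) ^ α := hpoly _
    _ ≤ C * slnorm ((γ : SL(2, ℝ)) ^ n) ^ β := by
        gcongr
        exact le_max_left _ _
    _ ≤ C * (K * (n + 1)) ^ β := by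
        gcongr
        exact hgrowth n
    _ = C * K ^ β * ((n : ℝ) + 1) ^ β := by
        rw [Real.mul_rpow hK (by positivity), mul_assoc]

theorem stmt4 {m : ℕ} (G : Subgroup SL(2, ℝ)) (ρ : G →* GL (Fin m) ℂ)
    (C α : ℝ) (hC : 0 < C)
    (hpoly : ∀ γ : G, cmatnorm (ρ γ : Matrix (Fin m) (Fin m) ℂ)
      ≤ C * slnorm (γ : SL(2, ℝ)) ^ α) :
    ∀ γ : G,
      ((γ : SL(2, ℝ)) : Matrix (Fin 2) (Fin 2) ℝ) ≠ 1 →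
      ((γ : SL(2, ℝ)) : Matrix (Fin 2) (Fin 2) ℝ) ≠ -1 →
      |Matrix.trace ((γ : SL(2, ℝ)) : Matrix (Fin 2) (Fin 2) ℝ)| = 2 →
      ∀ μ : ℂ, (Matrix.charpoly (ρ γ : Matrix (Fin m) (Fin m) ℂ)).IsRoot μ →
        ‖μ‖ = 1 := by
  intro γ _ _ htr μ hroot
  have hμ := Matrix.mem_spectrum_iff_isRoot_charpoly.mpr hroot
  have hμ_inv : μ⁻¹ ∈ spectrum ℂ (ρ γ⁻¹ : Matrix (Fin m) (Fin m) ℂ) := by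
    rw [map_inv]
    exact spectrum.inv₀_mem_inv hμ
  have htr_inv : |Matrix.trace (((γ⁻¹ : G) : SL(2, ℝ)) : Matrix (Fin 2) (Fin 2) ℝ)| = 2 := by
    rwa [InvMemClass.coe_inv, trace_inv_eq_trace]
  have hle := norm_le_one_of_mem_spectrum_of_abs_trace_eq_two ρ hC.le hpoly htr hμ
  have hge := norm_le_one_of_mem_spectrum_of_abs_trace_eq_two ρ hC.le hpoly htr_inv hμ_inv
  have hμ0 : μ ≠ 0 := ne_of_mem_of_not_mem hμ ((ρ γ).zero_notMem_spectrum ℂ)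
  rw [norm_inv, inv_le_one₀ (norm_pos_iff.mpr hμ0)] at hge
  exact le_antisymm hle hge
end

section
/- Let G be a discrete subgroup of SL(2,ℝ). Assume ∞ is a cusp of G, i.e. there exists h ≠ 0 with the matrix (1 h; 0 1) ∈ G. Let 𝔠 ∈ ℝ be a cusp of G, i.e. there exists a parabolic element γ = (a b; c d) ∈ G (γ ≠ ±I, |a+d| = 2) fixing 𝔠: c·𝔠² + (d−a)·𝔠 − b = 0. Suppose 𝔠 and ∞ are inequivalent cusps, i.e. there is no γ = (a b; c d) ∈ G with c·𝔠 + d = 0. Let K > 0 and v₀ > 0. Then there exists δ > 0 such that for every γ = (a b; c d) ∈ G and every z = u + iv ∈ ℂ with 0 < v < v₀ and |u − 𝔠| ≤ K·v, one has |c·z + d| ≥ δ. -/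
open scoped MatrixGroups
open Matrix Filter Topology

/-!
Shimizu's lemma, in a weak form: since `G` is discrete and contains the translation
`T = (1 h; 0 1)`, every `γ ∈ G` with `c ≠ 0` has `|c| ≥ 1 / (2|h|)`; otherwise the iterated
conjugates `γ, γTγ⁻¹, (γTγ⁻¹)T(γTγ⁻¹)⁻¹, …` are distinct from `T` but converge to it.
The cusp `𝔠` is fixed by a parabolic `P ∈ G`, and the lower-left entry of `γPγ⁻¹ ∈ G` is
`P₁₀ (c𝔠 + d)²`, which is nonzero because `𝔠` is not equivalent to `∞`; so `|c𝔠 + d|` is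
bounded below on `G`. On the triangle `|u - 𝔠| ≤ Kv` one has `|c𝔠 + d| ≤ (1 + K) |cz + d|`.
-/

lemma tendsto_zero_of_abs_succ_le_mul {u : ℕ → ℝ} {r : ℝ} (hr₀ : 0 ≤ r) (hr₁ : r < 1)
    (hu : ∀ n, |u (n + 1)| ≤ r * |u n|) : Tendsto u atTop (𝓝 0) := by
  refine squeeze_zero_norm (fun n => le_geom (u := fun n => |u n|) hr₀ n fun k _ => hu k) ?_
  simpa using (tendsto_pow_atTop_nhds_zero_of_lt_one hr₀ hr₁).mul_const |u 0|

lemma Filter.Tendsto.eventually_eq_of_discreteTopology {X ι : Type*} [TopologicalSpace X]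
    {S : Set X} [DiscreteTopology S] {l : Filter ι} {u : ι → X} {x : X} (hu : ∀ i, u i ∈ S)
    (hx : x ∈ S) (h : Tendsto u l (𝓝 x)) : ∀ᶠ i in l, u i = x := by
  have : Tendsto (fun i => (⟨u i, hu i⟩ : S)) l (𝓝 ⟨x, hx⟩) := tendsto_subtype_rng.2 h
  rw [nhds_discrete, tendsto_pure] at this
  exact this.mono fun i hi => congrArg Subtype.val hi

lemma tendsto_of_conj_translation_recursion {h : ℝ} {a c : ℕ → ℝ} (hc₀ : |h * c 0| < 1 / 2)
    (hc : ∀ n, c (n + 1) = -(h * c n ^ 2)) (ha : ∀ n, a (n + 1) = 1 - h * (a n * c n)) :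
    Tendsto a atTop (𝓝 1) ∧ Tendsto c atTop (𝓝 0) := by
  have hq : ∀ n, |h * c n| ≤ 1 / 2 := by
    intro n
    induction n with
    | zero => exact hc₀.le
    | succ n ih =>
      have : |h * c (n + 1)| = |h * c n| ^ 2 := by
        rw [hc, abs_mul, abs_neg, abs_mul, abs_pow, abs_mul]; ring
      nlinarith [abs_nonneg (h * c n), abs_nonneg (h * c 0)]
  have hc_succ : ∀ n, |c (n + 1)| = |h * c n| * |c n| := by
    intro n; rw [hc, abs_neg, abs_mul, abs_mul, abs_pow]; ring
  have hc_lim : Tendsto c atTop (𝓝 0) :=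
    tendsto_zero_of_abs_succ_le_mul (r := 1 / 2) (by norm_num) (by norm_num) fun n => by
      rw [hc_succ]; exact mul_le_mul_of_nonneg_right (hq n) (abs_nonneg _)
  have ha_bdd : ∀ n, |a n| ≤ max |a 0| 2 := by
    intro n
    induction n with
    | zero => exact le_max_left _ _
    | succ n ih =>
      have : |a (n + 1)| ≤ 1 + |h * c n| * |a n| := by
        rw [ha, ← abs_mul, show h * (a n * c n) = h * c n * a n by ring]
        simpa using abs_sub (1 : ℝ) (h * c n * a n)
      nlinarith [abs_nonneg (h * c n), abs_nonneg (a n), le_max_right |a 0| 2, hq n]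
  have hac : Tendsto (fun n => a n * c n) atTop (𝓝 0) := by
    refine squeeze_zero_norm (fun n => ?_) (by simpa using hc_lim.abs.const_mul (max |a 0| 2))
    rw [Real.norm_eq_abs, abs_mul]
    exact mul_le_mul_of_nonneg_right (ha_bdd n) (abs_nonneg _)
  refine ⟨?_, hc_lim⟩
  rw [← tendsto_add_atTop_iff_nat 1]
  simp only [ha]
  simpa using (hac.const_mul h).const_sub 1

namespace Matrix.SpecialLinearGroup

variable {R : Type*} [CommRing R]

lemma det_fin_two_apply (x : SL(2, R)) : x 0 0 * x 1 1 - x 0 1 * x 1 0 = 1 := by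
  have := x.det_coe
  rwa [det_fin_two] at this

lemma conj_apply_one_zero (x P : SL(2, R)) :
    (x * P * x⁻¹) 1 0 =
      x 1 1 ^ 2 * P 1 0 + x 1 0 * x 1 1 * (P 0 0 - P 1 1) - x 1 0 ^ 2 * P 0 1 := by
  simp only [coe_mul, coe_inv, adjugate_fin_two, mul_apply, Fin.sum_univ_two, of_apply, cons_val',
    cons_val_zero, cons_val_fin_one, cons_val_one]
  ring

lemma coe_conj_of_eq_translation (x T : SL(2, R)) {h : R}
    (hT : (T : Matrix (Fin 2) (Fin 2) R) = !![1, h; 0, 1]) :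
    ((x * T * x⁻¹ : SL(2, R)) : Matrix (Fin 2) (Fin 2) R) =
      !![1 - h * (x 0 0 * x 1 0), h * x 0 0 ^ 2; -(h * x 1 0 ^ 2), 1 + h * (x 0 0 * x 1 0)] := by
  have hdet := det_fin_two_apply x
  rw [coe_mul, coe_mul, coe_inv, adjugate_fin_two, hT]
  ext i j
  fin_cases i <;> fin_cases j <;>
    simp only [Fin.zero_eta, Fin.mk_one, mul_apply, of_apply, cons_val', cons_val_fin_one,
      Fin.sum_univ_two, cons_val_zero, cons_val_one, mul_one, mul_zero, add_zero]
  · linear_combination hdet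
  · ring
  · ring
  · linear_combination hdet

variable [IsDomain R]

lemma apply_zero_zero_sub_apply_one_one_of_fixes {P : SL(2, R)} {𝔠 : R}
    (htr : trace (P : Matrix (Fin 2) (Fin 2) R) ^ 2 = 4)
    (hfix : P 1 0 * 𝔠 ^ 2 + (P 1 1 - P 0 0) * 𝔠 - P 0 1 = 0) :
    P 0 0 - P 1 1 = 2 * P 1 0 * 𝔠 := by
  have hdet := det_fin_two_apply P
  rw [trace_fin_two] at htr
  -- `𝔠` is a double root of the fixed-point equation, whose discriminant is `tr² - 4 = 0`.
  have hsq : (2 * P 1 0 * 𝔠 + P 1 1 - P 0 0) ^ 2 = 0 := by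
    linear_combination 4 * P 1 0 * hfix + htr - 4 * hdet
  linear_combination -(pow_eq_zero_iff two_ne_zero).1 hsq

lemma conj_apply_one_zero_of_fixes {P : SL(2, R)} {𝔠 : R}
    (htr : trace (P : Matrix (Fin 2) (Fin 2) R) ^ 2 = 4)
    (hfix : P 1 0 * 𝔠 ^ 2 + (P 1 1 - P 0 0) * 𝔠 - P 0 1 = 0) (x : SL(2, R)) :
    (x * P * x⁻¹) 1 0 = P 1 0 * (x 1 0 * 𝔠 + x 1 1) ^ 2 := by
  have hdiag := apply_zero_zero_sub_apply_one_one_of_fixes htr hfix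
  rw [conj_apply_one_zero]
  linear_combination (x 1 0 * x 1 1 + x 1 0 ^ 2 * 𝔠) * hdiag + x 1 0 ^ 2 * hfix

lemma apply_one_zero_ne_zero_of_fixes {P : SL(2, R)} {𝔠 : R}
    (hP₁ : (P : Matrix (Fin 2) (Fin 2) R) ≠ 1) (hP₂ : (P : Matrix (Fin 2) (Fin 2) R) ≠ -1)
    (htr : trace (P : Matrix (Fin 2) (Fin 2) R) ^ 2 = 4)
    (hfix : P 1 0 * 𝔠 ^ 2 + (P 1 1 - P 0 0) * 𝔠 - P 0 1 = 0) :
    P 1 0 ≠ 0 := by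
  intro hr
  have hdiag := apply_zero_zero_sub_apply_one_one_of_fixes htr hfix
  have hdet := det_fin_two_apply P
  have hs : P 1 1 = P 0 0 := by linear_combination -hdiag - 2 * 𝔠 * hr
  have hq : P 0 1 = 0 := by linear_combination -hfix - 𝔠 ^ 2 * hr - 𝔠 * hdiag
  have hp : P 0 0 * P 0 0 = 1 := by linear_combination hdet - P 0 0 * hs + P 0 1 * hr
  have hP : (P : Matrix (Fin 2) (Fin 2) R) = !![P 0 0, 0; 0, P 0 0] := by
    rw [eta_fin_two (P : Matrix (Fin 2) (Fin 2) R)]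
    simp [hr, hs, hq]
  rcases mul_self_eq_one_iff.1 hp with h | h
  · exact hP₁ (by rw [hP, h, one_fin_two])
  · refine hP₂ ?_
    rw [hP, h]
    ext i j
    fin_cases i <;> fin_cases j <;> simp

end Matrix.SpecialLinearGroup

open Matrix.SpecialLinearGroup

theorem one_div_two_mul_abs_le_abs_apply_one_zero {G : Subgroup SL(2, ℝ)}
    (hdisc : DiscreteTopology
      ((fun g : SL(2, ℝ) => (g : Matrix (Fin 2) (Fin 2) ℝ)) '' (G : Set SL(2, ℝ))))
    {h : ℝ} (hh : h ≠ 0) {T : SL(2, ℝ)} (hTG : T ∈ G)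
    (hT : (T : Matrix (Fin 2) (Fin 2) ℝ) = !![1, h; 0, 1]) {γ : SL(2, ℝ)} (hγ : γ ∈ G)
    (hγ₁₀ : γ 1 0 ≠ 0) :
    1 / (2 * |h|) ≤ |γ 1 0| := by
  by_contra! hsmall
  set g : ℕ → SL(2, ℝ) := fun n => (fun x => x * T * x⁻¹)^[n] γ
  have hg_succ (n : ℕ) : g (n + 1) = g n * T * (g n)⁻¹ := Function.iterate_succ_apply' ..
  have hg_mem (n : ℕ) : g n ∈ G := by
    induction n with
    | zero => exact hγ
    | succ n ih => rw [hg_succ]; exact mul_mem (mul_mem ih hTG) (inv_mem ih)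
  have hg_coe (n : ℕ) : (g (n + 1) : Matrix (Fin 2) (Fin 2) ℝ) =
      !![1 - h * (g n 0 0 * g n 1 0), h * g n 0 0 ^ 2;
        -(h * g n 1 0 ^ 2), 1 + h * (g n 0 0 * g n 1 0)] := by
    rw [hg_succ]; exact coe_conj_of_eq_translation _ _ hT
  have hc_succ (n : ℕ) : g (n + 1) 1 0 = -(h * g n 1 0 ^ 2) := by simp [hg_coe]
  have ha_succ (n : ℕ) : g (n + 1) 0 0 = 1 - h * (g n 0 0 * g n 1 0) := by simp [hg_coe]
  have hc_ne (n : ℕ) : g n 1 0 ≠ 0 := by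
    induction n with
    | zero => exact hγ₁₀
    | succ n ih => rw [hc_succ]; simp [hh, ih]
  have hc₀ : |h * g 0 1 0| < 1 / 2 := by
    rw [lt_div_iff₀ (by positivity)] at hsmall
    change |h * γ 1 0| < 1 / 2
    rw [abs_mul]
    linarith
  obtain ⟨ha, hc⟩ := tendsto_of_conj_translation_recursion (a := fun n => g n 0 0)
    (c := fun n => g n 1 0) hc₀ hc_succ ha_succ
  have hlim : Tendsto (fun n => (g (n + 1) : Matrix (Fin 2) (Fin 2) ℝ)) atTop
      (𝓝 (T : Matrix (Fin 2) (Fin 2) ℝ)) := by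
    let F : ℝ × ℝ → Matrix (Fin 2) (Fin 2) ℝ := fun p =>
      !![1 - h * (p.1 * p.2), h * p.1 ^ 2; -(h * p.2 ^ 2), 1 + h * (p.1 * p.2)]
    have hF : Continuous F := by fun_prop
    have hFT : F (1, 0) = T := by rw [hT]; norm_num [F]
    rw [← hFT]
    exact ((hF.tendsto _).comp (ha.prodMk_nhds hc)).congr fun n => (hg_coe n).symm
  obtain ⟨n, hn⟩ := (hlim.eventually_eq_of_discreteTopology (S := _ '' _)
    (fun n => ⟨_, hg_mem (n + 1), rfl⟩) ⟨T, hTG, rfl⟩).exists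
  exact hc_ne (n + 1) (by simp [hn, hT])

theorem exists_pos_le_abs_apply_one_zero_mul_add {G : Subgroup SL(2, ℝ)}
    (hdisc : DiscreteTopology
      ((fun g : SL(2, ℝ) => (g : Matrix (Fin 2) (Fin 2) ℝ)) '' (G : Set SL(2, ℝ))))
    {h : ℝ} (hh : h ≠ 0) {T : SL(2, ℝ)} (hTG : T ∈ G)
    (hT : (T : Matrix (Fin 2) (Fin 2) ℝ) = !![1, h; 0, 1]) {P : SL(2, ℝ)} (hPG : P ∈ G)
    (hP₁ : (P : Matrix (Fin 2) (Fin 2) ℝ) ≠ 1) (hP₂ : (P : Matrix (Fin 2) (Fin 2) ℝ) ≠ -1)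
    (htr : trace (P : Matrix (Fin 2) (Fin 2) ℝ) ^ 2 = 4) {𝔠 : ℝ}
    (hfix : P 1 0 * 𝔠 ^ 2 + (P 1 1 - P 0 0) * 𝔠 - P 0 1 = 0)
    (hineq : ∀ γ ∈ G, γ 1 0 * 𝔠 + γ 1 1 ≠ 0) :
    ∃ ε > 0, ∀ γ ∈ G, ε ≤ |γ 1 0 * 𝔠 + γ 1 1| := by
  have hP₁₀ := apply_one_zero_ne_zero_of_fixes hP₁ hP₂ htr hfix
  refine ⟨√(1 / (2 * |h|) / |P 1 0|), by positivity, fun γ hγ => ?_⟩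
  have hconj := conj_apply_one_zero_of_fixes htr hfix γ
  have hbound := one_div_two_mul_abs_le_abs_apply_one_zero hdisc hh hTG hT
    (mul_mem (mul_mem hγ hPG) (inv_mem hγ))
    (by rw [hconj]; exact mul_ne_zero hP₁₀ (pow_ne_zero 2 (hineq γ hγ)))
  rw [hconj, abs_mul, abs_pow, ← div_le_iff₀' (abs_pos.2 hP₁₀)] at hbound
  rw [← Real.sqrt_sq (abs_nonneg (γ 1 0 * 𝔠 + γ 1 1))]
  exact Real.sqrt_le_sqrt hbound

lemma abs_mul_add_le_one_add_mul_norm (c d 𝔠 K : ℝ) (hK : 0 ≤ K) {z : ℂ} (hz : 0 ≤ z.im)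
    (hz𝔠 : |z.re - 𝔠| ≤ K * z.im) :
    |c * 𝔠 + d| ≤ (1 + K) * ‖(c : ℂ) * z + d‖ := by
  set w : ℂ := (c : ℂ) * z + d
  have hre : w.re = c * z.re + d := by simp [w]
  have him : |w.im| = |c| * z.im := by simp [w, abs_mul, abs_of_nonneg hz]
  calc |c * 𝔠 + d| = |w.re - c * (z.re - 𝔠)| := by rw [hre]; ring_nf
    _ ≤ |w.re| + |c| * |z.re - 𝔠| := by rw [← abs_mul]; exact abs_sub _ _
    _ ≤ |w.re| + |c| * (K * z.im) := by gcongr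
    _ = |w.re| + K * |w.im| := by rw [him]; ring
    _ ≤ ‖w‖ + K * ‖w‖ := by gcongr <;> [exact Complex.abs_re_le_norm w; exact Complex.abs_im_le_norm w]
    _ = (1 + K) * ‖w‖ := by ring

theorem stmt7_general (G : Subgroup SL(2, ℝ))
    (hdisc : DiscreteTopology
      ((fun g : SL(2, ℝ) => (g : Matrix (Fin 2) (Fin 2) ℝ)) '' (G : Set SL(2, ℝ))))
    (hinf : ∃ h : ℝ, h ≠ 0 ∧ ∃ γ ∈ G,
      (γ : Matrix (Fin 2) (Fin 2) ℝ) = !![1, h; 0, 1])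
    (𝔠 : ℝ)
    (hcusp : ∃ γ ∈ G,
      (γ : Matrix (Fin 2) (Fin 2) ℝ) ≠ 1 ∧
      (γ : Matrix (Fin 2) (Fin 2) ℝ) ≠ -1 ∧
      |Matrix.trace ((γ : Matrix (Fin 2) (Fin 2) ℝ))| = 2 ∧
      (γ : Matrix (Fin 2) (Fin 2) ℝ) 1 0 * 𝔠 ^ 2
        + ((γ : Matrix (Fin 2) (Fin 2) ℝ) 1 1 - (γ : Matrix (Fin 2) (Fin 2) ℝ) 0 0) * 𝔠
        - (γ : Matrix (Fin 2) (Fin 2) ℝ) 0 1 = 0)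
    (hineq : ∀ γ ∈ G,
      (γ : Matrix (Fin 2) (Fin 2) ℝ) 1 0 * 𝔠 + (γ : Matrix (Fin 2) (Fin 2) ℝ) 1 1 ≠ 0)
    (K v₀ : ℝ) (hK : 0 < K) :
    ∃ δ > (0 : ℝ), ∀ γ ∈ G, ∀ z : ℂ,
      0 < z.im → z.im < v₀ → |z.re - 𝔠| ≤ K * z.im →
      δ ≤ ‖(((γ : Matrix (Fin 2) (Fin 2) ℝ) 1 0 : ℂ) * z
          + ((γ : Matrix (Fin 2) (Fin 2) ℝ) 1 1 : ℂ))‖ := by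
  obtain ⟨h, hh, T, hTG, hT⟩ := hinf
  obtain ⟨P, hPG, hP₁, hP₂, htr, hfix⟩ := hcusp
  obtain ⟨ε, hε, hε_le⟩ := exists_pos_le_abs_apply_one_zero_mul_add hdisc hh hTG hT hPG hP₁ hP₂
    (by rw [← sq_abs, htr]; norm_num) hfix hineq
  refine ⟨ε / (1 + K), by positivity, fun γ hγ z hz _ hz𝔠 => ?_⟩
  rw [div_le_iff₀' (by positivity)]
  exact (hε_le γ hγ).trans (abs_mul_add_le_one_add_mul_norm _ _ _ _ hK.le hz.le hz𝔠)

theorem stmt7 (G : Subgroup SL(2, ℝ))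
    (hdisc : DiscreteTopology
      ((fun g : SL(2, ℝ) => (g : Matrix (Fin 2) (Fin 2) ℝ)) '' (G : Set SL(2, ℝ))))
    (hinf : ∃ h : ℝ, h ≠ 0 ∧ ∃ γ ∈ G,
      (γ : Matrix (Fin 2) (Fin 2) ℝ) = !![1, h; 0, 1])
    (𝔠 : ℝ)
    (hcusp : ∃ γ ∈ G,
      (γ : Matrix (Fin 2) (Fin 2) ℝ) ≠ 1 ∧
      (γ : Matrix (Fin 2) (Fin 2) ℝ) ≠ -1 ∧
      |Matrix.trace ((γ : Matrix (Fin 2) (Fin 2) ℝ))| = 2 ∧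
      (γ : Matrix (Fin 2) (Fin 2) ℝ) 1 0 * 𝔠 ^ 2
        + ((γ : Matrix (Fin 2) (Fin 2) ℝ) 1 1 - (γ : Matrix (Fin 2) (Fin 2) ℝ) 0 0) * 𝔠
        - (γ : Matrix (Fin 2) (Fin 2) ℝ) 0 1 = 0)
    (hineq : ∀ γ ∈ G,
      (γ : Matrix (Fin 2) (Fin 2) ℝ) 1 0 * 𝔠 + (γ : Matrix (Fin 2) (Fin 2) ℝ) 1 1 ≠ 0)
    (K v₀ : ℝ) (hK : 0 < K) (hv₀ : 0 < v₀) :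
    ∃ δ > (0 : ℝ), ∀ γ ∈ G, ∀ z : ℂ,
      0 < z.im → z.im < v₀ → |z.re - 𝔠| ≤ K * z.im →
      δ ≤ ‖(((γ : Matrix (Fin 2) (Fin 2) ℝ) 1 0 : ℂ) * z
          + ((γ : Matrix (Fin 2) (Fin 2) ℝ) 1 1 : ℂ))‖ :=
  stmt7_general G hdisc hinf 𝔠 hcusp hineq K v₀ hK
end
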